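/- arXiv:2602.17012 — 3 statements merged into one kernel-verified Lean document; each statement's English description precedes it below -/
import Mathlib

section
/- Let N ≥ 2 and let t₁,…,t_N ∈ (0,1), extended periodically in the index modulo N. Suppose points P_k, X_k in ℝ^d (indices modulo N) satisfy P_{k+1} = t_k X_k + (1 - t_k) P_k for all k. Then for every index i (mod N), P_i = Σ_{j=1}^N ν_i^j X_j, where ν_i^{i-1} = t_{i-1} / (1 - (1-t_1)⋯(1-t_N)), and for i-N ≤ j ≤ i-2, ν_i^j = (1-t_{i-1})(1-t_{i-2})⋯(1-t_{j+1}) t_j / (1 - (1-t_1)⋯(1-t_N)), all indices taken modulo N. -/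
/-!
Unrolling the recurrence `P (k + 1) = t k • X k + (1 - t k) • P k` over one full period, from
`P i` up to `P (i + N) = P i`, expresses `P i` as `q • P i` plus the claimed weighted sum of the
`X`'s (without the normalising denominator), where by periodicity `q = ∏ k < N, (1 - t k)`.
Since every `t k` lies in `(0, 1)`, `q < 1`, and solving for `P i` divides by `1 - q`.
-/

open Finset

theorem Function.Periodic.prod_Ico_eq_prod_range {M : Type*} [CommMonoid M] {f : ℕ → M} {a : ℕ}
    (hf : Function.Periodic f a) (n : ℕ) : ∏ k ∈ Ico n (n + a), f k = ∏ k ∈ range a, f k := by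
  rw [← Nat.image_Ico_mod n a, prod_image (Nat.mod_injOn_Ico n a)]
  exact prod_congr rfl fun k _ => (hf.map_mod_nat k).symm

theorem Function.Periodic.prod_range_reflect_add {M : Type*} [CommMonoid M] {f : ℕ → M} {a : ℕ}
    (hf : Function.Periodic f a) (i : ℕ) :
    ∏ r ∈ range a, f (i + a - (r + 1)) = ∏ k ∈ range a, f k := by
  rw [← hf.prod_Ico_eq_prod_range i, Finset.prod_Ico_eq_prod_range, Nat.add_sub_cancel_left,
    ← prod_range_reflect]
  refine prod_congr rfl fun r hr => ?_
  have := mem_range.mp hr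
  congr 1
  omega

theorem affine_recurrence_iterate {R M : Type*} [CommRing R] [AddCommGroup M] [Module R M]
    {t : ℕ → R} {P X : ℕ → M} (hrec : ∀ k, P (k + 1) = t k • X k + (1 - t k) • P k) (i m : ℕ) :
    P (i + m) = (∏ r ∈ range m, (1 - t (i + m - (r + 1)))) • P i
      + ∑ s ∈ range m,
        ((∏ r ∈ range s, (1 - t (i + m - (r + 1)))) * t (i + m - (s + 1))) • X (i + m - (s + 1)) := by
  induction m generalizing i with
  | zero => simp
  | succ m ih =>
    have hi : i + 1 + m - (m + 1) = i := by omega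
    rw [← add_assoc, ← Nat.add_right_comm, ih (i + 1), hrec, prod_range_succ, sum_range_succ, hi,
      smul_add, smul_smul, smul_smul]
    abel

theorem prod_one_sub_lt_one {ι R : Type*} [CommRing R] [PartialOrder R] [IsStrictOrderedRing R]
    {s : Finset ι} {t : ι → R} (hs : s.Nonempty) (ht : ∀ k ∈ s, t k ∈ Set.Ioo (0 : R) 1) :
    ∏ k ∈ s, (1 - t k) < 1 := by
  calc ∏ k ∈ s, (1 - t k) < ∏ k ∈ s, (1 : R) :=
        prod_lt_prod_of_nonempty (fun k hk => sub_pos.mpr (ht k hk).2)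
          (fun k hk => sub_lt_self 1 (ht k hk).1) hs
    _ = 1 := prod_const_one

theorem eq_inv_smul_of_eq_smul_add {K V : Type*} [Field K] [AddCommGroup V] [Module K V]
    {q : K} {x y : V} (hq : q ≠ 1) (h : x = q • x + y) : x = (1 - q)⁻¹ • y := by
  rw [eq_inv_smul_iff₀ (sub_ne_zero.mpr hq.symm), sub_smul, one_smul, sub_eq_iff_eq_add']
  exact h

theorem stmt_2_general (d N : ℕ) (hN : 2 ≤ N)
    (t : ℕ → ℝ) (P X : ℕ → Fin d → ℝ)
    (ht : ∀ k, t k ∈ Set.Ioo (0:ℝ) 1)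
    (htp : ∀ k, t (k + N) = t k) (hPp : ∀ k, P (k + N) = P k)
    (hrec : ∀ k, P (k + 1) = t k • X k + (1 - t k) • P k) :
    ∀ i : ℕ, P i = ∑ s ∈ Finset.range N,
      (((∏ r ∈ Finset.range s, (1 - t (i + N - (r + 1)))) * t (i + N - (s + 1)))
        / (1 - ∏ k ∈ Finset.range N, (1 - t k))) • X (i + N - (s + 1)) := by
  intro i
  have hcycle := affine_recurrence_iterate hrec i N
  have hperiodic : Function.Periodic (fun k => 1 - t k) N := fun k => by simp only [htp]
  rw [hPp, hperiodic.prod_range_reflect_add i] at hcycle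
  have hq := prod_one_sub_lt_one (s := range N) (nonempty_range_iff.mpr (by omega)) fun k _ => ht k
  rw [eq_inv_smul_of_eq_smul_add hq.ne hcycle, smul_sum]
  simp only [smul_smul, div_eq_inv_mul]

theorem stmt_2 (d N : ℕ) (hN : 2 ≤ N)
    (t : ℕ → ℝ) (P X : ℕ → Fin d → ℝ)
    (ht : ∀ k, t k ∈ Set.Ioo (0:ℝ) 1)
    (htp : ∀ k, t (k + N) = t k) (hPp : ∀ k, P (k + N) = P k) (hXp : ∀ k, X (k + N) = X k)
    (hrec : ∀ k, P (k + 1) = t k • X k + (1 - t k) • P k) :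
    ∀ i : ℕ, P i = ∑ s ∈ Finset.range N,
      (((∏ r ∈ Finset.range s, (1 - t (i + N - (r + 1)))) * t (i + N - (s + 1)))
        / (1 - ∏ k ∈ Finset.range N, (1 - t k))) • X (i + N - (s + 1)) :=
  stmt_2_general d N hN t P X ht htp hPp hrec
end

section
/- Let N ≥ 2, 0 < δ₁ < δ₂ < 1, δ₂ < λ ≤ 1, and suppose χ₁,…,χ_N ∈ [δ₁, δ₂]. Set t_k = χ_k/λ ∈ (0,1) for each k. Then the coefficients ν_i^j defined by the cyclic formula ν_i^{i-1} = t_{i-1}/(1-τ), ν_i^j = (1-t_{i-1})⋯(1-t_{j+1}) t_j/(1-τ) for i-N ≤ j ≤ i-2 (indices mod N, τ = ∏(1-t_k)) satisfy ν_i^j ≥ (λ - δ₂)^{N-1} δ₁ for all i, j. -/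
/-!
Each factor `1 - t_k` is at least `1 - δ₂/λ = (λ - δ₂)/λ ≥ λ - δ₂`, which lies in `[0, 1]`,
and `t_j ≥ δ₁/λ ≥ δ₁`; so the numerator of `ν_i^j` is at least `(λ - δ₂)^(N-1) δ₁`.
The denominator `1 - τ` lies in `(0, 1]`, so dividing by it only increases the numerator.
-/

open Finset

theorem Finset.prod_lt_one_of_nonneg {ι R : Type*} [CommMonoidWithZero R] [PartialOrder R]
    [ZeroLEOneClass R] [PosMulMono R] {s : Finset ι} {f : ι → R} (hs : s.Nonempty)
    (h0 : ∀ i ∈ s, 0 ≤ f i) (h1 : ∀ i ∈ s, f i < 1) : ∏ i ∈ s, f i < 1 := by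
  obtain ⟨j, hj⟩ := hs
  calc ∏ i ∈ s, f i ≤ ∏ i ∈ {j}, f i :=
        prod_le_prod_of_subset_of_le_one (singleton_subset_iff.2 hj) h0
          fun i hi _ ↦ (h1 i hi).le
    _ = f j := prod_singleton f j
    _ < 1 := h1 j hj

theorem sub_pow_mul_le_one_sub_div_pow_mul_div {a b l : ℝ} {s n : ℕ} (ha : 0 ≤ a) (hb : 0 ≤ b)
    (hbl : b < l) (hl : l ≤ 1) (hsn : s ≤ n) :
    (l - b) ^ n * a ≤ (1 - b / l) ^ s * (a / l) := by
  have hl0 : 0 < l := hb.trans_lt hbl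
  have hlb : 0 ≤ l - b := sub_nonneg.2 hbl.le
  have hbase : l - b ≤ 1 - b / l := by
    rw [one_sub_div hl0.ne']
    exact le_div_self hlb hl0 hl
  have hpow : (l - b) ^ n ≤ (1 - b / l) ^ s :=
    calc (l - b) ^ n ≤ (l - b) ^ s := pow_le_pow_of_le_one hlb (by linarith) hsn
      _ ≤ (1 - b / l) ^ s := pow_le_pow_left₀ hlb hbase s
  exact mul_le_mul hpow (le_div_self ha hl0 hl) ha (pow_nonneg (hlb.trans hbase) s)

theorem Finset.pow_card_mul_le_prod_one_sub_mul {ι : Type*} {s : Finset ι} {t : ι → ℝ}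
    {a b : ℝ} {j : ι} (ha : 0 ≤ a) (hb : b ≤ 1) (hs : ∀ i ∈ s, t i ≤ b) (hj : a ≤ t j) :
    (1 - b) ^ #s * a ≤ (∏ i ∈ s, (1 - t i)) * t j := by
  have hfac : ∀ i ∈ s, 1 - b ≤ 1 - t i := fun i hi ↦ sub_le_sub_left (hs i hi) 1
  rw [← prod_const]
  exact mul_le_mul (prod_le_prod (fun _ _ ↦ sub_nonneg.2 hb) hfac) hj ha
    (prod_nonneg fun i hi ↦ (sub_nonneg.2 hb).trans (hfac i hi))

theorem stmt_4_general (N : ℕ) (δ₁ δ₂ lam : ℝ)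
    (h1 : 0 < δ₁) (hl : δ₂ < lam) (hl1 : lam ≤ 1)
    (χ : ℕ → ℝ) (hχ : ∀ k, χ k ∈ Set.Icc δ₁ δ₂)
    (t : ℕ → ℝ) (htdef : ∀ k, t k = χ k / lam) :
    ∀ i : ℕ, ∀ s ∈ Finset.range N,
      (lam - δ₂) ^ (N - 1) * δ₁ ≤
        ((∏ r ∈ Finset.range s, (1 - t (i + N - (r + 1)))) * t (i + N - (s + 1)))
          / (1 - ∏ k ∈ Finset.range N, (1 - t k)) := by
  intro i s hs
  have hδ₂ : 0 ≤ δ₂ := by linarith [(hχ 0).1, (hχ 0).2]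
  have hlam : 0 < lam := hδ₂.trans_lt hl
  have ht : ∀ k, δ₁ / lam ≤ t k ∧ t k ≤ δ₂ / lam := fun k ↦ by
    rw [htdef]
    exact ⟨by gcongr; exact (hχ k).1, by gcongr; exact (hχ k).2⟩
  have hδ₂lam : δ₂ / lam < 1 := (div_lt_one hlam).2 hl
  have hfac : ∀ k, 0 ≤ 1 - t k := fun k ↦ sub_nonneg.2 ((ht k).2.trans hδ₂lam.le)
  have htpos : ∀ k, 0 < t k := fun k ↦ (div_pos h1 hlam).trans_le (ht k).1
  have hτ : ∏ k ∈ range N, (1 - t k) < 1 :=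
    prod_lt_one_of_nonneg (nonempty_range_iff.2 (ne_zero_of_lt (mem_range.1 hs)))
      (fun k _ ↦ hfac k) fun k _ ↦ sub_lt_self 1 (htpos k)
  calc (lam - δ₂) ^ (N - 1) * δ₁ ≤ (1 - δ₂ / lam) ^ s * (δ₁ / lam) :=
        sub_pow_mul_le_one_sub_div_pow_mul_div h1.le hδ₂ hl hl1
          (Nat.le_sub_one_of_lt (mem_range.1 hs))
    _ ≤ (∏ r ∈ range s, (1 - t (i + N - (r + 1)))) * t (i + N - (s + 1)) := by
        simpa only [card_range] using pow_card_mul_le_prod_one_sub_mul (s := range s)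
          (div_pos h1 hlam).le hδ₂lam.le (fun r _ ↦ (ht (i + N - (r + 1))).2)
          (ht (i + N - (s + 1))).1
    _ ≤ _ := le_div_self (mul_nonneg (prod_nonneg fun r _ ↦ hfac _) (htpos _).le)
        (sub_pos.2 hτ) (sub_le_self 1 (prod_nonneg fun k _ ↦ hfac k))

theorem stmt_4 (N : ℕ) (hN : 2 ≤ N) (δ₁ δ₂ lam : ℝ)
    (h1 : 0 < δ₁) (h12 : δ₁ < δ₂) (h2 : δ₂ < 1) (hl : δ₂ < lam) (hl1 : lam ≤ 1)
    (χ : ℕ → ℝ) (hχ : ∀ k, χ k ∈ Set.Icc δ₁ δ₂) (hχp : ∀ k, χ (k + N) = χ k)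
    (t : ℕ → ℝ) (htdef : ∀ k, t k = χ k / lam) :
    ∀ i : ℕ, ∀ s ∈ Finset.range N,
      (lam - δ₂) ^ (N - 1) * δ₁ ≤
        ((∏ r ∈ Finset.range s, (1 - t (i + N - (r + 1)))) * t (i + N - (s + 1)))
          / (1 - ∏ k ∈ Finset.range N, (1 - t k)) :=
  stmt_4_general N δ₁ δ₂ lam h1 hl hl1 χ hχ t htdef
end

section
/- Let a ∈ ℝ^n \ {0}, G̃ ⊂ ℝ^n a bounded measurable set, and let I ⊂ (0,1) be an interval with characteristic function χ extended 1-periodically to ℝ. For δ > 0 define G̃^δ = { x ∈ G̃ : χ(a·x/δ) = 1 }. Then with δ_ℓ = |a|/ℓ, one has |G̃^{δ_ℓ}| → |I| · |G̃| as ℓ → ∞ over positive integers. -/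
/-!
Rotate coordinates so that `a / |a|` is the first axis; by Fubini it suffices to show, for each
slice `A ⊆ ℝ` of finite measure, that `|A ∩ {t | fract (ℓ t) ∈ I}| → |I| |A|`. For a set `E` of
period `T`, averaging `|A ∩ (E - v)|` over `v ∈ (0, T]` gives exactly `|E ∩ (0, T]| / T · |A|`,
while each term differs from `|A ∩ E|` by at most `|(A + v) ∆ A|`, which is small for small `v`
by continuity of translation in measure. Dominated convergence over the slices finishes.
-/

open MeasureTheory Filter Set Topology
open scoped symmDiff ENNReal

theorem tendsto_measure_preimage_add_right_symmDiff {G : Type*} [AddGroup G] [TopologicalSpace G]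
    [IsTopologicalAddGroup G] [MeasurableSpace G] [BorelSpace G] {μ : Measure G}
    [μ.IsAddRightInvariant] [μ.InnerRegularCompactLTTop] [IsLocallyFiniteMeasure μ] {A : Set G}
    (hA : NullMeasurableSet A μ) (hAfin : μ A ≠ ∞) :
    Tendsto (fun v => μ (((· + v) ⁻¹' A) ∆ A)) (𝓝 0) (𝓝 0) := by
  let addRight : C(G, C(G, G)) := ContinuousMap.curry ⟨fun p : G × G => p.2 + p.1, by fun_prop⟩
  have hcoe : ∀ v, ⇑(addRight v) = (· + v) := fun v => funext fun x => rfl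
  simpa [hcoe] using tendsto_measure_symmDiff_preimage_nhds_zero
    (addRight.continuous.tendsto 0) (.of_forall fun v => measurePreserving_add_right μ v)
    (measurePreserving_add_right μ 0) hA hAfin

theorem measure_inter_le_measure_inter_add_symmDiff {α : Type*} [MeasurableSpace α]
    (μ : Measure α) (s t u : Set α) : μ (s ∩ u) ≤ μ (t ∩ u) + μ (s ∆ t) := by
  refine (measure_mono fun x (hx : x ∈ s ∩ u) => ?_).trans (measure_union_le _ _)
  obtain ⟨hs, hu⟩ := hx
  by_cases ht : x ∈ t
  · exact Or.inl ⟨ht, hu⟩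
  · exact Or.inr (Or.inl ⟨hs, ht⟩)

section Periodic

variable {E : Set ℝ} {T : ℝ}

theorem volume_inter_Ioc_eq_of_periodic (hE : MeasurableSet E) (hper : Function.Periodic (· ∈ E) T)
    (hT : 0 < T) (u : ℝ) : volume (E ∩ Ioc u (u + T)) = volume (E ∩ Ioc 0 T) := by
  have h := (isAddFundamentalDomain_Ioc hT u).measure_set_eq (isAddFundamentalDomain_Ioc hT 0) hE
    fun ⟨_, k, rfl⟩ => by ext t; simpa [add_comm _ t, zsmul_eq_mul] using hper.zsmul k t
  rwa [zero_add] at h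

theorem lintegral_volume_inter_preimage_add_of_periodic (hE : MeasurableSet E)
    (hper : Function.Periodic (· ∈ E) T) (hT : 0 < T) {A : Set ℝ} (hA : MeasurableSet A) :
    ∫⁻ v in Ioc 0 T, volume (A ∩ (· + v) ⁻¹' E) = volume (E ∩ Ioc 0 T) * volume A := by
  let W : Set (ℝ × ℝ) := {p | p.2 ∈ A ∧ p.2 + p.1 ∈ E}
  have hW : MeasurableSet W := (measurable_snd hA).inter ((measurable_snd.add measurable_fst) hE)
  have hslice : ∀ t, volume.restrict (Ioc 0 T) ((fun v => (v, t)) ⁻¹' W)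
      = A.indicator (fun _ => volume (E ∩ Ioc 0 T)) t := by
    intro t
    by_cases ht : t ∈ A
    · have : (fun v => (v, t)) ⁻¹' W ∩ Ioc 0 T = (t + ·) ⁻¹' (E ∩ Ioc t (t + T)) := by
        ext v; simp [W, ht]
      rw [indicator_of_mem ht, Measure.restrict_apply' measurableSet_Ioc, this,
        measure_preimage_add, volume_inter_Ioc_eq_of_periodic hE hper hT]
    · simp [W, ht]
  calc ∫⁻ v in Ioc 0 T, volume (A ∩ (· + v) ⁻¹' E)
      = (volume.restrict (Ioc 0 T)).prod volume W := (Measure.prod_apply hW).symm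
    _ = volume (E ∩ Ioc 0 T) * volume A := by
      simp_rw [Measure.prod_apply_symm hW, hslice, lintegral_indicator_const hA]

theorem le_volume_inter_add_and_volume_inter_le_add_of_periodic (hE : MeasurableSet E)
    (hper : Function.Periodic (· ∈ E) T) (hT : 0 < T) {d : ℝ≥0∞}
    (hd : volume (E ∩ Ioc 0 T) = d * ENNReal.ofReal T) {A : Set ℝ}
    (hA : MeasurableSet A) {δ : ℝ≥0∞} (hδ : ∀ v ∈ Ioc 0 T, volume (((· + -v) ⁻¹' A) ∆ A) ≤ δ) :
    d * volume A ≤ volume (A ∩ E) + δ ∧ volume (A ∩ E) ≤ d * volume A + δ := by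
  set g : ℝ → ℝ≥0∞ := fun v => volume (A ∩ (· + v) ⁻¹' E)
  have hg : ∀ v, g v = volume ((· + -v) ⁻¹' A ∩ E) := fun v => by
    rw [← measure_preimage_add_right volume v ((· + -v) ⁻¹' A ∩ E)]
    simp only [g, preimage_inter, preimage_preimage, add_neg_cancel_right, preimage_id']
  have hupper : ∀ v ∈ Ioc 0 T, g v ≤ volume (A ∩ E) + δ := fun v hv =>
    hg v ▸ (measure_inter_le_measure_inter_add_symmDiff _ _ _ _).trans (by gcongr; exact hδ v hv)
  have hlower : ∀ v ∈ Ioc 0 T, volume (A ∩ E) ≤ g v + δ := fun v hv =>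
    hg v ▸ (measure_inter_le_measure_inter_add_symmDiff _ _ _ _).trans
      (by rw [symmDiff_comm]; gcongr; exact hδ v hv)
  have hint : ∫⁻ v in Ioc 0 T, g v = d * volume A * ENNReal.ofReal T := by
    rw [lintegral_volume_inter_preimage_add_of_periodic hE hper hT hA, hd, mul_right_comm]
  have hT₀ : ENNReal.ofReal T ≠ 0 := by simpa using hT
  constructor
  · rw [← ENNReal.mul_le_mul_iff_left hT₀ ENNReal.ofReal_ne_top, ← hint]
    calc ∫⁻ v in Ioc 0 T, g v ≤ ∫⁻ _ in Ioc 0 T, (volume (A ∩ E) + δ) :=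
          setLIntegral_mono measurable_const hupper
      _ = (volume (A ∩ E) + δ) * ENNReal.ofReal T := by simp
  · rw [← ENNReal.mul_le_mul_iff_left hT₀ ENNReal.ofReal_ne_top, add_mul, ← hint]
    calc volume (A ∩ E) * ENNReal.ofReal T = ∫⁻ _ in Ioc 0 T, volume (A ∩ E) := by simp
      _ ≤ ∫⁻ v in Ioc 0 T, (g v + δ) := setLIntegral_mono' measurableSet_Ioc hlower
      _ = (∫⁻ v in Ioc 0 T, g v) + δ * ENNReal.ofReal T := by
        rw [lintegral_add_right _ measurable_const]; simp

end Periodic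

theorem tendsto_volume_inter_preimage_mul_of_periodic {S : Set ℝ} (hS : MeasurableSet S)
    (hper : Function.Periodic (· ∈ S) 1) {A : Set ℝ} (hA : MeasurableSet A)
    (hAfin : volume A ≠ ∞) :
    Tendsto (fun ℓ : ℝ => volume (A ∩ (ℓ * ·) ⁻¹' S)) atTop
      (𝓝 (volume (S ∩ Ioc 0 1) * volume A)) := by
  have hSfin : volume (S ∩ Ioc 0 1) ≠ ∞ :=
    ((measure_mono inter_subset_right).trans_lt measure_Ioc_lt_top).ne
  rw [ENNReal.tendsto_nhds (ENNReal.mul_ne_top hSfin hAfin)]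
  intro ε hε
  have hφ : Tendsto (fun v => volume (((· + -v) ⁻¹' A) ∆ A)) (𝓝 0) (𝓝 0) :=
    (tendsto_measure_preimage_add_right_symmDiff hA.nullMeasurableSet hAfin).comp
      (by simpa using tendsto_neg (0 : ℝ))
  obtain ⟨η, hη, hsmall⟩ := Metric.eventually_nhds_iff.mp (hφ.eventually (Iic_mem_nhds hε))
  filter_upwards [eventually_gt_atTop η⁻¹] with ℓ hℓ
  have hℓ₀ : 0 < ℓ := (inv_pos.2 hη).trans hℓ
  have hper' : Function.Periodic (· ∈ (ℓ * ·) ⁻¹' S) ℓ⁻¹ := fun t => by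
    simpa [mul_add, mul_inv_cancel₀ hℓ₀.ne'] using hper (ℓ * t)
  have hd : volume ((ℓ * ·) ⁻¹' S ∩ Ioc 0 ℓ⁻¹) = volume (S ∩ Ioc 0 1) * ENNReal.ofReal ℓ⁻¹ := by
    have : (ℓ * ·) ⁻¹' S ∩ Ioc 0 ℓ⁻¹ = (ℓ * ·) ⁻¹' (S ∩ Ioc 0 1) := by
      rw [preimage_inter, preimage_const_mul_Ioc₀ _ _ hℓ₀]; simp
    rw [this, Real.volume_preimage_mul_left hℓ₀.ne', abs_of_pos (inv_pos.2 hℓ₀), mul_comm]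
  obtain ⟨hlower, hupper⟩ := le_volume_inter_add_and_volume_inter_le_add_of_periodic
    (hS.preimage (measurable_const_mul ℓ)) hper' (inv_pos.2 hℓ₀) hd hA fun v hv => hsmall <| by
      rw [Real.dist_eq, sub_zero, abs_of_pos hv.1]
      exact hv.2.trans_lt (inv_lt_of_inv_lt₀ hη hℓ)
  exact ⟨tsub_le_iff_right.2 hlower, hupper⟩

theorem tendsto_measure_prod_inter_preimage_mul_of_periodic {Y : Type*} [MeasurableSpace Y]
    {ν : Measure Y} [SFinite ν] {S : Set ℝ} (hS : MeasurableSet S)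
    (hper : Function.Periodic (· ∈ S) 1) {G : Set (ℝ × Y)} (hG : MeasurableSet G)
    (hGfin : volume.prod ν G ≠ ∞) :
    Tendsto (fun ℓ : ℝ => volume.prod ν (G ∩ {p | ℓ * p.1 ∈ S})) atTop
      (𝓝 (volume (S ∩ Ioc 0 1) * volume.prod ν G)) := by
  have hGℓ : ∀ ℓ : ℝ, MeasurableSet (G ∩ {p | ℓ * p.1 ∈ S}) := fun ℓ =>
    hG.inter (hS.preimage (measurable_fst.const_mul ℓ))
  have hslice_meas := measurable_measure_prodMk_right (μ := volume) hG
  rw [Measure.prod_apply_symm hG] at hGfin ⊢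
  simp_rw [Measure.prod_apply_symm (hGℓ _), ← lintegral_const_mul _ hslice_meas]
  refine tendsto_lintegral_filter_of_dominated_convergence _
    (.of_forall fun ℓ => measurable_measure_prodMk_right (hGℓ ℓ))
    (.of_forall fun ℓ => ae_of_all _ fun y => measure_mono inter_subset_left) hGfin ?_
  filter_upwards [ae_lt_top hslice_meas hGfin] with y hy
  exact tendsto_volume_inter_preimage_mul_of_periodic hS hper (measurable_prodMk_right hG) hy.ne

theorem exists_measurePreserving_fst_eq_sum_mul {m : ℕ} (u : Fin (m + 1) → ℝ)
    (hu : ∑ k, u k ^ 2 = 1) :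
    ∃ Φ : (Fin (m + 1) → ℝ) ≃ᵐ ℝ × (Fin m → ℝ),
      MeasurePreserving Φ ∧ ∀ x, (Φ x).1 = ∑ k, u k * x k := by
  have horth : Orthonormal ℝ (({0} : Set (Fin (m + 1))).domRestrict fun _ => WithLp.toLp 2 u) := by
    rw [orthonormal_iff_ite]
    rintro ⟨_, rfl⟩ ⟨_, rfl⟩
    simp [EuclideanSpace.norm_eq, hu]
  obtain ⟨b, hb⟩ := horth.exists_orthonormalBasis_extension_of_card_eq (by simp)
  let e := MeasurableEquiv.toLp 2 (Fin (m + 1) → ℝ)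
  refine ⟨((e.trans b.repr.toHomeomorph.toMeasurableEquiv).trans e.symm).trans
    (MeasurableEquiv.piFinSuccAbove (fun _ => ℝ) 0), ?_, fun x => ?_⟩
  · exact (volume_preserving_piFinSuccAbove (fun _ => ℝ) 0).comp
      ((EuclideanSpace.volume_preserving_symm_measurableEquiv_toLp _).comp
        (b.repr.measurePreserving.comp
          (EuclideanSpace.volume_preserving_symm_measurableEquiv_toLp _).symm))
  · change b.repr (WithLp.toLp 2 x) 0 = _
    rw [b.repr_apply_apply, hb 0 rfl]
    simp [PiLp.inner_apply, mul_comm]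

theorem periodic_mem_setOf_fract_mem (I : Set ℝ) :
    Function.Periodic (· ∈ {t : ℝ | Int.fract t ∈ I}) 1 := fun t => by simp

theorem setOf_fract_mem_Ioo_inter_Ioc {c₁ c₂ : ℝ} (h₁ : 0 ≤ c₁) (h₂ : c₂ ≤ 1) :
    {t : ℝ | Int.fract t ∈ Ioo c₁ c₂} ∩ Ioc 0 1 = Ioo c₁ c₂ := by
  ext t
  simp only [mem_inter_iff, mem_ofPred_eq, mem_Ioc]
  constructor
  · rintro ⟨hfract, ht₀, ht₁⟩
    obtain rfl | ht₁ := ht₁.eq_or_lt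
    · rw [Int.fract_one] at hfract
      linarith [hfract.1]
    · rwa [Int.fract_eq_self.2 ⟨ht₀.le, ht₁⟩] at hfract
  · intro ht
    have ht' : t ∈ Ico 0 1 := ⟨h₁.trans ht.1.le, ht.2.trans_le h₂⟩
    rw [Int.fract_eq_self.2 ht']
    exact ⟨ht, h₁.trans_lt ht.1, ht'.2.le⟩

theorem stmt_17_general (n : ℕ) (a : Fin n → ℝ) (ha : a ≠ 0)
    (Gt : Set (Fin n → ℝ)) (hGm : MeasurableSet Gt) (hGb : Bornology.IsBounded Gt)
    (c₁ c₂ : ℝ) (h0 : 0 < c₁) (h21 : c₂ < 1)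
    (χ : ℝ → ℝ) (hχ : ∀ t : ℝ, χ t = if Int.fract t ∈ Set.Ioo c₁ c₂ then 1 else 0) :
    Tendsto
      (fun ℓ : ℕ => volume
        {x | x ∈ Gt ∧ χ ((∑ k, a k * x k) / (Real.sqrt (∑ k, a k ^ 2) / (ℓ : ℝ))) = 1})
      atTop (nhds (ENNReal.ofReal (c₂ - c₁) * volume Gt)) := by
  obtain ⟨m, rfl⟩ : ∃ m, n = m + 1 :=
    Nat.exists_eq_add_one.2 (Nat.pos_of_ne_zero (by rintro rfl; exact ha (Subsingleton.elim _ _)))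
  have hsum : 0 < ∑ k, a k ^ 2 := by
    obtain ⟨k, hk⟩ := Function.ne_iff.1 ha
    exact Finset.sum_pos' (fun i _ => sq_nonneg _) ⟨k, Finset.mem_univ _, sq_pos_of_ne_zero hk⟩
  set r := √(∑ k, a k ^ 2)
  obtain ⟨Φ, hΦ, hΦ₁⟩ := exists_measurePreserving_fst_eq_sum_mul (fun k => a k / r) <| by
    simp_rw [div_pow, ← Finset.sum_div, r, Real.sq_sqrt hsum.le, div_self hsum.ne']
  set S := {t : ℝ | Int.fract t ∈ Ioo c₁ c₂}
  have hlevel : ∀ ℓ : ℕ, {x | x ∈ Gt ∧ χ ((∑ k, a k * x k) / (r / ℓ)) = 1}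
      = Φ ⁻¹' (Φ.symm ⁻¹' Gt ∩ {p | ℓ * p.1 ∈ S}) := fun ℓ => by
    ext x
    have harg : (∑ k, a k * x k) / (r / ℓ) = ℓ * (Φ x).1 := by
      rw [hΦ₁, div_div_eq_mul_div, mul_comm, mul_div_assoc, Finset.sum_div]
      simp_rw [div_mul_eq_mul_div]
    simp [hχ, S, harg, -mem_Ioo]
  have hlim := tendsto_measure_prod_inter_preimage_mul_of_periodic (ν := volume) (S := S)
    (measurable_fract measurableSet_Ioo) (periodic_mem_setOf_fract_mem _)
    (hGm.preimage Φ.symm.measurable) (by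
      rw [← Measure.volume_eq_prod, hΦ.symm.measure_preimage_equiv]
      exact hGb.measure_lt_top.ne)
  rw [← Measure.volume_eq_prod, setOf_fract_mem_Ioo_inter_Ioc h0.le h21.le, Real.volume_Ioo,
    hΦ.symm.measure_preimage_equiv] at hlim
  simp_rw [hlevel, hΦ.measure_preimage_equiv]
  exact hlim.comp tendsto_natCast_atTop_atTop

theorem stmt_17 (n : ℕ) (a : Fin n → ℝ) (ha : a ≠ 0)
    (Gt : Set (Fin n → ℝ)) (hGm : MeasurableSet Gt) (hGb : Bornology.IsBounded Gt)
    (c₁ c₂ : ℝ) (h0 : 0 < c₁) (h12 : c₁ ≤ c₂) (h21 : c₂ < 1)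
    (χ : ℝ → ℝ) (hχ : ∀ t : ℝ, χ t = if Int.fract t ∈ Set.Ioo c₁ c₂ then 1 else 0) :
    Tendsto
      (fun ℓ : ℕ => volume
        {x | x ∈ Gt ∧ χ ((∑ k, a k * x k) / (Real.sqrt (∑ k, a k ^ 2) / (ℓ : ℝ))) = 1})
      atTop (nhds (ENNReal.ofReal (c₂ - c₁) * volume Gt)) :=
  stmt_17_general n a ha Gt hGm hGb c₁ c₂ h0 h21 χ hχ
end
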